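/- arXiv:1206.4072 — 3 statements merged into one kernel-verified Lean document; each statement's English description precedes it below -/
import Mathlib

section
/- Let γ̃ : J → ℝ³ be a smooth unit speed spacelike curve with timelike acceleration, with Frenet frame T = γ̃', κ = √(−⟪γ̃'',γ̃''⟫), N = γ̃''/κ, B = T ×ₗ N, τ = ⟪N', B⟫. Suppose A > 0 and B₀ ≠ 0 are constants with A·κ(s) + B₀·τ(s) = 1 for all s ∈ J, let ξ ∈ (−π/2, π/2) satisfy tan ξ = −B₀/A, and set f(s) = cos ξ·T(s) − sin ξ·B(s). Then γ̃'(s) = cos ξ·f(s) + A·tan ξ·(f(s) ×ₗ f'(s)) for all s ∈ J; hence every spacelike Bertrand curve of this type is recovered, up to translation, by integrating a·f + a·tan ξ·(f ×ₗ df/dν) in the arc-length parameter ν of f with a = A. -/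
noncomputable section

/-- Minkowski inner product ⟪x,y⟫ = x₁y₁ + x₂y₂ − x₃y₃ on ℝ³. -/
def mdot (x y : Fin 3 → ℝ) : ℝ := x 0 * y 0 + x 1 * y 1 - x 2 * y 2

/-- Lorentzian cross product x ×ₗ y. -/
def lcross (x y : Fin 3 → ℝ) : Fin 3 → ℝ :=
  ![x 1 * y 2 - x 2 * y 1, x 2 * y 0 - x 0 * y 2, x 1 * y 0 - x 0 * y 1]

/-- Determinant of the 3×3 matrix with rows x, y, z. -/
def det3 (x y z : Fin 3 → ℝ) : ℝ :=
  x 0 * (y 1 * z 2 - y 2 * z 1) - x 1 * (y 0 * z 2 - y 2 * z 0) + x 2 * (y 0 * z 1 - y 1 * z 0)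

/-- Minkowski norm ‖x‖ = √|⟪x,x⟫|. -/
def mnorm (x : Fin 3 → ℝ) : ℝ := Real.sqrt |mdot x x|

private lemma mdot_comm' (x y : Fin 3 → ℝ) : mdot x y = mdot y x := by unfold mdot; ring
private lemma mdot_smul_left (c : ℝ) (x y : Fin 3 → ℝ) : mdot (c • x) y = c * mdot x y := by
  simp only [mdot, Pi.smul_apply, smul_eq_mul]; ring
private lemma mdot_smul_right (c : ℝ) (x y : Fin 3 → ℝ) : mdot x (c • y) = c * mdot x y := by
  simp only [mdot, Pi.smul_apply, smul_eq_mul]; ring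

private lemma hasDerivAt_comp_mdot {g h : ℝ → Fin 3 → ℝ} {g' h' : Fin 3 → ℝ} {s : ℝ}
    (hg : HasDerivAt g g' s) (hh : HasDerivAt h h' s) :
    HasDerivAt (fun t => mdot (g t) (h t)) (mdot g' (h s) + mdot (g s) h') s := by
  have hgi := hasDerivAt_pi.1 hg
  have hhi := hasDerivAt_pi.1 hh
  have H := (((hgi 0).fun_mul (hhi 0)).fun_add ((hgi 1).fun_mul (hhi 1))).fun_sub ((hgi 2).fun_mul (hhi 2))
  convert H using 1 <;> try rfl
  simp only [mdot]; ring

private lemma hasDerivAt_comp_lcross {g h : ℝ → Fin 3 → ℝ} {g' h' : Fin 3 → ℝ} {s : ℝ}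
    (hg : HasDerivAt g g' s) (hh : HasDerivAt h h' s) :
    HasDerivAt (fun t => lcross (g t) (h t)) (fun i => lcross g' (h s) i + lcross (g s) h' i) s := by
  have hgi := hasDerivAt_pi.1 hg
  have hhi := hasDerivAt_pi.1 hh
  rw [hasDerivAt_pi]
  intro i
  fin_cases i <;>
    simp only [lcross, Matrix.cons_val_zero, Matrix.cons_val_one, Matrix.head_cons,
      Matrix.cons_val_two, Matrix.tail_cons, Fin.isValue]
  · convert ((hgi 1).fun_mul (hhi 2)).fun_sub ((hgi 2).fun_mul (hhi 1)) using 1 <;> try rfl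
    simp [lcross]; ring
  · convert ((hgi 2).fun_mul (hhi 0)).fun_sub ((hgi 0).fun_mul (hhi 2)) using 1 <;> try rfl
    simp [lcross]; ring
  · convert ((hgi 1).fun_mul (hhi 0)).fun_sub ((hgi 0).fun_mul (hhi 1)) using 1 <;> try rfl
    simp [lcross]; ring


private lemma keyalg (u v n : Fin 3 → ℝ) (k t : ℝ)
    (huu : mdot u u = 1) (huv : mdot u v = 0) (hvv : mdot v v = -1)
    (hnu : mdot n u = k) (hnv : mdot n v = 0) (hnw : mdot n (lcross u v) = t) :
    lcross u n = t • v := by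
  simp only [mdot, lcross, Matrix.cons_val_zero, Matrix.cons_val_one, Matrix.head_cons,
    Matrix.cons_val_two, Matrix.tail_cons] at huu huv hvv hnu hnv hnw
  have e0 : u 1 * n 2 - u 2 * n 1 = t * v 0 := by
    linear_combination u 1 * (((u 0*v 0+u 1*v 1-u 2*v 2) * u 2 - (u 0*u 0+u 1*u 1-u 2*u 2) * v 2) * hnv + (-((v 0*v 0+v 1*v 1-v 2*v 2) * u 2 - (u 0*v 0+u 1*v 1-u 2*v 2) * v 2)) * hnu + (u 1*v 0 - u 0*v 1) * hnw + n 2 * (-(u 0*v 0+u 1*v 1-u 2*v 2) * huv + (u 0*u 0+u 1*u 1-u 2*u 2) * hvv - huu) + (-(k * u 2)) * hvv + (k * v 2) * huv) - u 2 * (((u 0*v 0+u 1*v 1-u 2*v 2) * u 1 - (u 0*u 0+u 1*u 1-u 2*u 2) * v 1) * hnv + (-((v 0*v 0+v 1*v 1-v 2*v 2) * u 1 - (u 0*v 0+u 1*v 1-u 2*v 2) * v 1)) * hnu + (u 2*v 0 - u 0*v 2) * hnw + n 1 * (-(u 0*v 0+u 1*v 1-u 2*v 2) * huv + (u 0*u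 0+u 1*u 1-u 2*u 2) * hvv - huu) + (-(k * u 1)) * hvv + (k * v 1) * huv) + (t * v 0) * huu - (t * u 0) * huv
  have e1 : u 2 * n 0 - u 0 * n 2 = t * v 1 := by
    linear_combination u 2 * (((u 0*v 0+u 1*v 1-u 2*v 2) * u 0 - (u 0*u 0+u 1*u 1-u 2*u 2) * v 0) * hnv + (-((v 0*v 0+v 1*v 1-v 2*v 2) * u 0 - (u 0*v 0+u 1*v 1-u 2*v 2) * v 0)) * hnu + (u 1*v 2 - u 2*v 1) * hnw + n 0 * (-(u 0*v 0+u 1*v 1-u 2*v 2) * huv + (u 0*u 0+u 1*u 1-u 2*u 2) * hvv - huu) + (-(k * u 0)) * hvv + (k * v 0) * huv) - u 0 * (((u 0*v 0+u 1*v 1-u 2*v 2) * u 2 - (u 0*u 0+u 1*u 1-u 2*u 2) * v 2) * hnv + (-((v 0*v 0+v 1*v 1-v 2*v 2) * u 2 - (u 0*v 0+u 1*v 1-u 2*v 2) * v 2)) * hnu + (u 1*v 0 - u 0*v 1) * hnw + n 2 * (-(u 0*v 0+u 1*v 1-u 2*v 2) * huv + (u 0*u 0+u 1*u 1-u 2*u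 2) * hvv - huu) + (-(k * u 2)) * hvv + (k * v 2) * huv) + (t * v 1) * huu - (t * u 1) * huv
  have e2 : u 1 * n 0 - u 0 * n 1 = t * v 2 := by
    linear_combination u 1 * (((u 0*v 0+u 1*v 1-u 2*v 2) * u 0 - (u 0*u 0+u 1*u 1-u 2*u 2) * v 0) * hnv + (-((v 0*v 0+v 1*v 1-v 2*v 2) * u 0 - (u 0*v 0+u 1*v 1-u 2*v 2) * v 0)) * hnu + (u 1*v 2 - u 2*v 1) * hnw + n 0 * (-(u 0*v 0+u 1*v 1-u 2*v 2) * huv + (u 0*u 0+u 1*u 1-u 2*u 2) * hvv - huu) + (-(k * u 0)) * hvv + (k * v 0) * huv) - u 0 * (((u 0*v 0+u 1*v 1-u 2*v 2) * u 1 - (u 0*u 0+u 1*u 1-u 2*u 2) * v 1) * hnv + (-((v 0*v 0+v 1*v 1-v 2*v 2) * u 1 - (u 0*v 0+u 1*v 1-u 2*v 2) * v 1)) * hnu + (u 2*v 0 - u 0*v 2) * hnw + n 1 * (-(u 0*v 0+u 1*v 1-u 2*v 2) * huv + (u 0*u 0+u 1*u 1-u 2*u 2) * hvv - huu) + (-(k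 * u 1)) * hvv + (k * v 1) * huv) + (t * v 2) * huu - (t * u 2) * huv
  funext i
  fin_cases i <;> simp only [lcross, Pi.smul_apply, smul_eq_mul, Fin.isValue] <;>
    simp [lcross] <;> [linarith [e0]; linarith [e1]; linarith [e2]]

/-- Recovery of a spacelike Bertrand curve from its associated timelike spherical curve:
with f = cosξ·T − sinξ·B as in the converse construction,
γ̃'(s) = cosξ·f(s) + A·tanξ·(f(s) ×ₗ f'(s)) for all s; hence every such spacelike
Bertrand curve is recovered, up to translation, by integrating
a·f + a·tanξ·(f ×ₗ df/dν) with a = A. -/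
theorem stmt_13 (c d : ℝ) (γ : ℝ → Fin 3 → ℝ)
    (hγ : ContDiffOn ℝ (⊤ : ℕ∞) γ (Set.Ioo c d))
    (hsp : ∀ s ∈ Set.Ioo c d, mdot (deriv γ s) (deriv γ s) = 1)
    (hacc : ∀ s ∈ Set.Ioo c d, mdot (deriv (deriv γ) s) (deriv (deriv γ) s) < 0)
    (T N Bf : ℝ → Fin 3 → ℝ) (κ τ : ℝ → ℝ)
    (hT : T = fun s => deriv γ s)
    (hκ : κ = fun s => Real.sqrt (-(mdot (deriv (deriv γ) s) (deriv (deriv γ) s))))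
    (hN : ∀ s ∈ Set.Ioo c d, N s = (κ s)⁻¹ • deriv (deriv γ) s)
    (hB : ∀ s ∈ Set.Ioo c d, Bf s = lcross (T s) (N s))
    (hτ : ∀ s ∈ Set.Ioo c d, τ s = mdot (deriv N s) (Bf s))
    (A B₀ : ℝ) (hA : 0 < A) (hB₀ : B₀ ≠ 0)
    (hBer : ∀ s ∈ Set.Ioo c d, A * κ s + B₀ * τ s = 1)
    (ξ : ℝ) (hξ : ξ ∈ Set.Ioo (-(Real.pi / 2)) (Real.pi / 2))
    (htan : Real.tan ξ = -B₀ / A)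
    (f : ℝ → Fin 3 → ℝ)
    (hf : ∀ s ∈ Set.Ioo c d, f s = Real.cos ξ • T s - Real.sin ξ • Bf s) :
    ∀ s ∈ Set.Ioo c d,
      deriv γ s = Real.cos ξ • f s + (A * Real.tan ξ) • lcross (f s) (deriv f s) := by
  intro s hs
  have hIo : IsOpen (Set.Ioo c d) := isOpen_Ioo
  -- smoothness of derivatives
  have hγ1 : ContDiffOn ℝ (⊤ : ℕ∞) (deriv γ) (Set.Ioo c d) :=
    hγ.deriv_of_isOpen hIo (by simp)
  have hγ2 : ContDiffOn ℝ (⊤ : ℕ∞) (deriv (deriv γ)) (Set.Ioo c d) :=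
    hγ1.deriv_of_isOpen hIo (by simp)
  have hd1 : ∀ t ∈ Set.Ioo c d, HasDerivAt (deriv γ) (deriv (deriv γ) t) t := fun t ht =>
    (((hγ1.differentiableOn (by simp)).differentiableAt (hIo.mem_nhds ht))).hasDerivAt
  have hd2 : HasDerivAt (deriv (deriv γ)) (deriv (deriv (deriv γ)) s) s :=
    (((hγ2.differentiableOn (by simp)).differentiableAt (hIo.mem_nhds hs))).hasDerivAt
  -- κ positivity
  have hκpos : ∀ t ∈ Set.Ioo c d, 0 < κ t := by
    intro t ht
    rw [hκ]
    exact Real.sqrt_pos.2 (by linarith [hacc t ht])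
  have hκs := hκpos s hs
  have hκsq : ∀ t ∈ Set.Ioo c d,
      mdot (deriv (deriv γ) t) (deriv (deriv γ) t) = -(κ t ^ 2) := by
    intro t ht
    rw [hκ]
    rw [Real.sq_sqrt (by linarith [hacc t ht])]
    ring
  -- orthogonality γ' ⟂ γ'' on the interval
  have horth : ∀ t ∈ Set.Ioo c d, mdot (deriv γ t) (deriv (deriv γ) t) = 0 := by
    intro t ht
    have h1 := hasDerivAt_comp_mdot (hd1 t ht) (hd1 t ht)
    have h2 : HasDerivAt (fun r => mdot (deriv γ r) (deriv γ r)) 0 t :=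
      (hasDerivAt_const t (1 : ℝ)).congr_of_eventuallyEq
        (Filter.eventuallyEq_of_mem (hIo.mem_nhds ht) (fun r hr => hsp r hr))
    have h3 := h1.unique h2
    have h4 := mdot_comm' (deriv (deriv γ) t) (deriv γ t)
    linarith
  -- basic vectors
  have hγ''s : deriv (deriv γ) s = κ s • N s := by
    rw [hN s hs, smul_inv_smul₀ (ne_of_gt hκs)]
  have hB' : ∀ t ∈ Set.Ioo c d, Bf t = lcross (deriv γ t) (N t) := by
    intro t ht; rw [hB t ht]; simp only [hT]
  have hf' : ∀ t ∈ Set.Ioo c d, f t = Real.cos ξ • deriv γ t - Real.sin ξ • Bf t := by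
    intro t ht; rw [hf t ht]; simp only [hT]
  have hvv : mdot (N s) (N s) = -1 := by
    rw [hN s hs, mdot_smul_left, mdot_smul_right, hκsq s hs]
    field_simp
  have huv : mdot (deriv γ s) (N s) = 0 := by
    rw [hN s hs, mdot_smul_right, horth s hs]
    ring
  -- differentiability of N at s
  have hNdiff : DifferentiableAt ℝ N s := by
    have hq : DifferentiableAt ℝ (fun t => -(mdot (deriv (deriv γ) t) (deriv (deriv γ) t))) s := by
      have : ∀ t ∈ Set.Ioo c d, DifferentiableAt ℝ (deriv (deriv γ)) t := fun t ht =>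
        ((hγ2.differentiableOn (by simp)).differentiableAt (hIo.mem_nhds ht))
      exact ((hasDerivAt_comp_mdot hd2 hd2).differentiableAt).neg
    have hκdiff : DifferentiableAt ℝ κ s := by
      rw [hκ]
      exact hq.sqrt (by linarith [hacc s hs])
    have hκne : κ s ≠ 0 := ne_of_gt hκs
    have hNfun : DifferentiableAt ℝ (fun t => (κ t)⁻¹ • deriv (deriv γ) t) s :=
      (hκdiff.inv hκne).smul hd2.differentiableAt
    exact hNfun.congr_of_eventuallyEq
      (Filter.eventuallyEq_of_mem (hIo.mem_nhds hs) (fun t ht => hN t ht))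
  have hNd : HasDerivAt N (deriv N s) s := hNdiff.hasDerivAt
  -- scalar facts about n' = deriv N s
  have hNNconst : ∀ t ∈ Set.Ioo c d, mdot (N t) (N t) = -1 := by
    intro t ht
    rw [hN t ht, mdot_smul_left, mdot_smul_right, hκsq t ht]
    field_simp [ne_of_gt (hκpos t ht)]
  have hNTconst : ∀ t ∈ Set.Ioo c d, mdot (N t) (deriv γ t) = 0 := by
    intro t ht
    rw [hN t ht, mdot_smul_left, mdot_comm' (deriv (deriv γ) t), horth t ht]
    ring
  have hnv : mdot (deriv N s) (N s) = 0 := by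
    have h1 := hasDerivAt_comp_mdot hNd hNd
    have h2 : HasDerivAt (fun r => mdot (N r) (N r)) 0 s :=
      (hasDerivAt_const s (-1 : ℝ)).congr_of_eventuallyEq
        (Filter.eventuallyEq_of_mem (hIo.mem_nhds hs) (fun r hr => hNNconst r hr))
    have h3 := h1.unique h2
    have h4 := mdot_comm' (N s) (deriv N s)
    linarith
  have hnu : mdot (deriv N s) (deriv γ s) = κ s := by
    have h1 := hasDerivAt_comp_mdot hNd (hd1 s hs)
    have h2 : HasDerivAt (fun r => mdot (N r) (deriv γ r)) 0 s :=
      (hasDerivAt_const s (0 : ℝ)).congr_of_eventuallyEq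
        (Filter.eventuallyEq_of_mem (hIo.mem_nhds hs) (fun r hr => hNTconst r hr))
    have h3 := h1.unique h2
    have h5 : mdot (N s) (deriv (deriv γ) s) = -(κ s) := by
      rw [hγ''s, mdot_smul_right, hvv]; ring
    linarith
  -- the key cross product identity: u ×ₗ n' = τ s • N s
  have hnw : mdot (deriv N s) (lcross (deriv γ s) (N s)) = τ s := by
    rw [hτ s hs, hB' s hs]
  have hkey : lcross (deriv γ s) (deriv N s) = τ s • N s :=
    keyalg (deriv γ s) (N s) (deriv N s) (κ s) (τ s) (hsp s hs) huv hvv hnu hnv hnw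
  -- derivative of f at s
  have hBd := hasDerivAt_comp_lcross (hd1 s hs) hNd
  have hfd : HasDerivAt f
      (Real.cos ξ • deriv (deriv γ) s -
        Real.sin ξ • fun i =>
          lcross (deriv (deriv γ) s) (N s) i + lcross (deriv γ s) (deriv N s) i) s := by
    have hfd0 : HasDerivAt (fun t => Real.cos ξ • deriv γ t - Real.sin ξ • lcross (deriv γ t) (N t))
        (Real.cos ξ • deriv (deriv γ) s -
          Real.sin ξ • fun i =>
            lcross (deriv (deriv γ) s) (N s) i + lcross (deriv γ s) (deriv N s) i) s :=
      ((hd1 s hs).const_smul (Real.cos ξ)).sub (hBd.const_smul (Real.sin ξ))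
    refine hfd0.congr_of_eventuallyEq ?_
    refine Filter.eventuallyEq_of_mem (hIo.mem_nhds hs) (fun t ht => ?_)
    rw [hf' t ht, hB' t ht]
  have hD : deriv f s = (Real.cos ξ * κ s - Real.sin ξ * τ s) • N s := by
    rw [hfd.deriv]
    funext i
    have h1 : lcross (deriv (deriv γ) s) (N s) i = 0 := by
      rw [hγ''s]
      fin_cases i <;> simp [lcross] <;> ring
    have h2 : lcross (deriv γ s) (deriv N s) i = τ s * N s i := by
      rw [hkey]; simp
    have h3 : deriv (deriv γ) s i = κ s * N s i := by rw [hγ''s]; simp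
    simp only [Pi.sub_apply, Pi.smul_apply, smul_eq_mul, h1, h2, h3]
    ring
  -- scalar identity
  have hcos : 0 < Real.cos ξ := Real.cos_pos_of_mem_Ioo hξ
  have hsin : A * Real.sin ξ = -B₀ * Real.cos ξ := by
    have h := htan
    rw [Real.tan_eq_sin_div_cos] at h
    field_simp at h
    linarith
  have hAt : A * Real.tan ξ = -B₀ := by
    rw [htan]; field_simp
  have hmu : A * Real.tan ξ * (Real.cos ξ * κ s - Real.sin ξ * τ s) = Real.sin ξ := by
    have hb := hBer s hs
    rw [hAt]
    linear_combination (-(κ s)) * hsin + Real.sin ξ * hb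
  -- cross product of f and f'
  have hfs : f s = Real.cos ξ • deriv γ s - Real.sin ξ • lcross (deriv γ s) (N s) := by
    rw [hf' s hs, hB' s hs]
  have hvv' := hvv
  have huv' := huv
  simp only [mdot] at hvv' huv'
  have hL : ∀ i, lcross (f s) (deriv f s) i =
      (Real.cos ξ * κ s - Real.sin ξ * τ s) *
        (Real.cos ξ * lcross (deriv γ s) (N s) i + Real.sin ξ * deriv γ s i) := by
    intro i
    rw [hfs, hD]
    set u := deriv γ s with hu
    set v := N s with hv
    fin_cases i <;>
      simp [lcross, Pi.sub_apply, Pi.smul_apply, smul_eq_mul] <;>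
      [ linear_combination (-((Real.cos ξ * κ s - Real.sin ξ * τ s) * Real.sin ξ * u 0)) * hvv' +
          ((Real.cos ξ * κ s - Real.sin ξ * τ s) * Real.sin ξ * v 0) * huv';
        linear_combination (-((Real.cos ξ * κ s - Real.sin ξ * τ s) * Real.sin ξ * u 1)) * hvv' +
          ((Real.cos ξ * κ s - Real.sin ξ * τ s) * Real.sin ξ * v 1) * huv';
        linear_combination (-((Real.cos ξ * κ s - Real.sin ξ * τ s) * Real.sin ξ * u 2)) * hvv' +
          ((Real.cos ξ * κ s - Real.sin ξ * τ s) * Real.sin ξ * v 2) * huv']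
  -- final assembly
  have hpyth : Real.sin ξ ^ 2 + Real.cos ξ ^ 2 = 1 := Real.sin_sq_add_cos_sq ξ
  funext i
  simp only [Pi.add_apply, Pi.sub_apply, Pi.smul_apply, smul_eq_mul, hL i]
  rw [hfs]
  simp only [Pi.sub_apply, Pi.smul_apply, smul_eq_mul]
  linear_combination (-(deriv γ s i)) * hpyth +
    (-(Real.cos ξ * lcross (deriv γ s) (N s) i + Real.sin ξ * deriv γ s i)) * hmu
end
end

section
/- Let f : I → ℝ³ be a unit speed timelike curve on S²₁ with 0 ∈ I, let θ ∈ (0, π/2] and u > 0 be constants, set ξ = cot θ · ln u and assume cos ξ > 0, and put a = u sin θ cos ξ. Let γ̃(v) = a∫₀^v f(t)dt + a·tan ξ·∫₀^v f(t) ×ₗ f'(t) dt be the corresponding spacelike Bertrand curve. Then for every v ∈ I, γ̃'(v) = u sin θ·(cos(cot θ · ln u)·f(v) + sin(cot θ · ln u)·(f(v) ×ₗ f'(v))) = x(u, v); that is, γ̃' is the v-parameter curve of, and lies on, the timelike constant slope surface x(u,v) lying in the spacelike cone. -/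
noncomputable section

/-- With ξ = cotθ·ln u and a = u·sinθ·cosξ, the derivative of the spacelike Bertrand
curve γ̃ is the v-parameter curve of the timelike constant slope surface lying in the
spacelike cone: γ̃'(v) = u·sinθ·(cos(cotθ·ln u)·f(v) + sin(cotθ·ln u)·(f(v) ×ₗ f'(v))). -/
theorem stmt_17 (a b : ℝ) (f : ℝ → Fin 3 → ℝ)
    (hf : ContDiffOn ℝ (⊤ : ℕ∞) f (Set.Ioo a b))
    (hsph : ∀ v ∈ Set.Ioo a b, mdot (f v) (f v) = 1)
    (htl : ∀ v ∈ Set.Ioo a b, mdot (deriv f v) (deriv f v) = -1)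
    (h0 : (0 : ℝ) ∈ Set.Ioo a b)
    (θ u : ℝ) (hθ : θ ∈ Set.Ioc 0 (Real.pi / 2)) (hu : 0 < u)
    (ξ : ℝ) (hξdef : ξ = Real.cos θ / Real.sin θ * Real.log u)
    (hcos : 0 < Real.cos ξ)
    (A : ℝ) (hA : A = u * Real.sin θ * Real.cos ξ)
    (γ : ℝ → Fin 3 → ℝ)
    (hγ : ∀ v ∈ Set.Ioo a b,
      γ v = A • (∫ w in (0:ℝ)..v, f w)
          + (A * Real.tan ξ) • (∫ w in (0:ℝ)..v, lcross (f w) (deriv f w))) :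
    ∀ v ∈ Set.Ioo a b,
      deriv γ v = (u * Real.sin θ) •
        (Real.cos (Real.cos θ / Real.sin θ * Real.log u) • f v
          + Real.sin (Real.cos θ / Real.sin θ * Real.log u) • lcross (f v) (deriv f v)) := by
  intro v hv
  have hopen : IsOpen (Set.Ioo a b) := isOpen_Ioo
  have hfc : ContinuousOn f (Set.Ioo a b) := hf.continuousOn
  have hdc : ContinuousOn (deriv f) (Set.Ioo a b) :=
    hf.continuousOn_deriv_of_isOpen hopen (by simp)
  have happ : ∀ (i : Fin 3) (g : ℝ → Fin 3 → ℝ), ContinuousOn g (Set.Ioo a b) →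
      ContinuousOn (fun w => g w i) (Set.Ioo a b) := fun i g hg =>
    (continuous_apply i).comp_continuousOn hg
  have hgc : ContinuousOn (fun w => lcross (f w) (deriv f w)) (Set.Ioo a b) := by
    rw [continuousOn_pi]
    intro i
    fin_cases i <;>
      simp only [lcross, Matrix.cons_val_zero, Matrix.cons_val_one, Matrix.head_cons,
        Matrix.cons_val_two, Matrix.tail_cons, Fin.isValue] <;>
      exact ((happ _ _ hfc).mul (happ _ _ hdc)).sub ((happ _ _ hfc).mul (happ _ _ hdc))
  have hsub : Set.uIcc (0:ℝ) v ⊆ Set.Ioo a b :=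
    Set.ordConnected_Ioo.uIcc_subset h0 hv
  have hint1 : IntervalIntegrable f MeasureTheory.volume 0 v :=
    (hfc.mono hsub).intervalIntegrable
  have hint2 : IntervalIntegrable (fun w => lcross (f w) (deriv f w))
      MeasureTheory.volume 0 v := (hgc.mono hsub).intervalIntegrable
  have hD1 : HasDerivAt (fun t => ∫ w in (0:ℝ)..t, f w) (f v) v :=
    intervalIntegral.integral_hasDerivAt_right hint1
      (hfc.stronglyMeasurableAtFilter hopen v hv)
      (hfc.continuousAt (hopen.mem_nhds hv))
  have hD2 : HasDerivAt (fun t => ∫ w in (0:ℝ)..t, lcross (f w) (deriv f w))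
      (lcross (f v) (deriv f v)) v :=
    intervalIntegral.integral_hasDerivAt_right hint2
      (hgc.stronglyMeasurableAtFilter hopen v hv)
      (hgc.continuousAt (hopen.mem_nhds hv))
  have hDγ : HasDerivAt (fun t => A • (∫ w in (0:ℝ)..t, f w)
      + (A * Real.tan ξ) • (∫ w in (0:ℝ)..t, lcross (f w) (deriv f w)))
      (A • f v + (A * Real.tan ξ) • lcross (f v) (deriv f v)) v :=
    (hD1.const_smul A).add (hD2.const_smul (A * Real.tan ξ))
  have heq : γ =ᶠ[nhds v] fun t => A • (∫ w in (0:ℝ)..t, f w)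
      + (A * Real.tan ξ) • (∫ w in (0:ℝ)..t, lcross (f w) (deriv f w)) := by
    filter_upwards [hopen.mem_nhds hv] with t ht
    exact hγ t ht
  rw [heq.deriv_eq, hDγ.deriv]
  rw [← hξdef, smul_add, smul_smul, smul_smul]
  have hc : Real.cos ξ ≠ 0 := ne_of_gt hcos
  have h1 : u * Real.sin θ * Real.cos ξ = A := hA.symm
  have h2 : u * Real.sin θ * Real.sin ξ = A * Real.tan ξ := by
    rw [hA, Real.tan_eq_sin_div_cos]; field_simp
  rw [h1, h2]
end
end

section
/- The curve f(v) = (cosh v, 0, sinh v), v ∈ ℝ, is a unit speed timelike curve on S²₁ (⟪f,f⟫ = 1, ⟪f',f'⟫ = −1) satisfying f(v) ×ₗ f'(v) = (0, −1, 0) and κ_g(v) = 0 for all v; consequently, the associated spacelike Bertrand curve γ(v) = (√2/2)·e·(cos(1)·sinh v, −sin(1)·v, cos(1)·(cosh v − 1)) is spacelike (⟪γ',γ'⟫ = e²/2 > 0) and is a helix: its curvature κ(v) = ‖γ'(v) ×ₗ γ''(v)‖ / ⟪γ'(v),γ'(v)⟫^{3/2} and torsion τ(v) = det(γ'(v), γ''(v),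 γ'''(v)) / ‖γ'(v) ×ₗ γ''(v)‖² are both nonzero constants. -/
noncomputable section

/-
The curve f is the unit hyperbola in the (x₁, x₃)-plane, so f'' = f and κ_g = det(f, f', f) = 0.
The Bertrand curve is a hyperbolic helix v ↦ (a sinh v, b v, a (cosh v − 1)) with
a = r cos 1, b = −r sin 1, r = √2 e / 2. Because cosh² − sinh² = 1, the quantities
⟪γ', γ'⟫ = a² + b², ⟪γ' ×ₗ γ'', γ' ×ₗ γ''⟫ = a² (a² + b²) and det(γ', γ'', γ''') = a² b
do not depend on v, so κ = |a| / (a² + b²) and τ = b / (a² + b²) are constant, and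
a² + b² = r² = e² / 2.
-/

open Real

theorem deriv_vec3 {a b c a' b' c' : ℝ → ℝ} (ha : ∀ v, HasDerivAt a (a' v) v)
    (hb : ∀ v, HasDerivAt b (b' v) v) (hc : ∀ v, HasDerivAt c (c' v) v) :
    deriv (fun v => ![a v, b v, c v]) = fun v => ![a' v, b' v, c' v] := by
  funext v
  refine HasDerivAt.deriv (hasDerivAt_pi.2 fun i => ?_)
  fin_cases i <;> simp [ha v, hb v, hc v]

theorem det3_self_left (x y : Fin 3 → ℝ) : det3 x y x = 0 := by
  unfold det3; ring

theorem mnorm_of_nonneg {x : Fin 3 → ℝ} (hx : 0 ≤ mdot x x) : mnorm x = √(mdot x x) := by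
  rw [mnorm, abs_of_nonneg hx]

section UnitHyperbola

def unitHyperbola (v : ℝ) : Fin 3 → ℝ := ![cosh v, 0, sinh v]

theorem deriv_unitHyperbola : deriv unitHyperbola = fun v => ![sinh v, 0, cosh v] :=
  deriv_vec3 hasDerivAt_cosh (fun v => hasDerivAt_const v 0) hasDerivAt_sinh

theorem deriv_deriv_unitHyperbola : deriv (deriv unitHyperbola) = unitHyperbola := by
  rw [deriv_unitHyperbola]
  exact deriv_vec3 hasDerivAt_sinh (fun v => hasDerivAt_const v 0) hasDerivAt_cosh

variable (v : ℝ)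

theorem mdot_unitHyperbola_self : mdot (unitHyperbola v) (unitHyperbola v) = 1 := by
  simp [mdot, unitHyperbola, ← cosh_sq_sub_sinh_sq v, sq]

theorem mdot_deriv_unitHyperbola_self :
    mdot (deriv unitHyperbola v) (deriv unitHyperbola v) = -1 := by
  simp [mdot, deriv_unitHyperbola, ← cosh_sq_sub_sinh_sq v, sq]

theorem lcross_unitHyperbola_deriv :
    lcross (unitHyperbola v) (deriv unitHyperbola v) = ![0, -1, 0] := by
  funext i
  fin_cases i <;> simp [lcross, unitHyperbola, deriv_unitHyperbola, ← cosh_sq_sub_sinh_sq v, sq]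

end UnitHyperbola

def lorentzCurvature (γ : ℝ → Fin 3 → ℝ) (v : ℝ) : ℝ :=
  mnorm (lcross (deriv γ v) (deriv (deriv γ) v)) / √(mdot (deriv γ v) (deriv γ v)) ^ 3

def lorentzTorsion (γ : ℝ → Fin 3 → ℝ) (v : ℝ) : ℝ :=
  det3 (deriv γ v) (deriv (deriv γ) v) (deriv (deriv (deriv γ)) v)
    / mnorm (lcross (deriv γ v) (deriv (deriv γ) v)) ^ 2

section HyperbolicHelix

variable (a b : ℝ)

def hyperbolicHelix (v : ℝ) : Fin 3 → ℝ := ![a * sinh v, b * v, a * (cosh v - 1)]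

theorem deriv_hyperbolicHelix :
    deriv (hyperbolicHelix a b) = fun v => ![a * cosh v, b, a * sinh v] :=
  deriv_vec3 (fun v => (hasDerivAt_sinh v).const_mul a)
    (fun v => by simpa using (hasDerivAt_id v).const_mul b)
    (fun v => ((hasDerivAt_cosh v).sub_const 1).const_mul a)

theorem deriv_deriv_hyperbolicHelix :
    deriv (deriv (hyperbolicHelix a b)) = fun v => ![a * sinh v, 0, a * cosh v] := by
  rw [deriv_hyperbolicHelix]
  exact deriv_vec3 (fun v => (hasDerivAt_cosh v).const_mul a) (fun v => hasDerivAt_const v b)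
    (fun v => (hasDerivAt_sinh v).const_mul a)

theorem deriv_deriv_deriv_hyperbolicHelix :
    deriv (deriv (deriv (hyperbolicHelix a b))) = fun v => ![a * cosh v, 0, a * sinh v] := by
  rw [deriv_deriv_hyperbolicHelix]
  exact deriv_vec3 (fun v => (hasDerivAt_sinh v).const_mul a) (fun v => hasDerivAt_const v 0)
    (fun v => (hasDerivAt_cosh v).const_mul a)

variable (v : ℝ)

theorem mdot_deriv_hyperbolicHelix_self :
    mdot (deriv (hyperbolicHelix a b) v) (deriv (hyperbolicHelix a b) v) = a ^ 2 + b ^ 2 := by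
  simp only [mdot, deriv_hyperbolicHelix, Matrix.cons_val]
  linear_combination a ^ 2 * cosh_sq_sub_sinh_sq v

theorem mdot_lcross_deriv_hyperbolicHelix :
    mdot (lcross (deriv (hyperbolicHelix a b) v) (deriv (deriv (hyperbolicHelix a b)) v))
      (lcross (deriv (hyperbolicHelix a b) v) (deriv (deriv (hyperbolicHelix a b)) v)) =
      a ^ 2 * (a ^ 2 + b ^ 2) := by
  rw [deriv_deriv_hyperbolicHelix, deriv_hyperbolicHelix]
  simp only [mdot, lcross, Matrix.cons_val]
  linear_combination (a ^ 2 * b ^ 2 + a ^ 4 * (cosh v ^ 2 - sinh v ^ 2 + 1)) * cosh_sq_sub_sinh_sq v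

theorem det3_derivs_hyperbolicHelix :
    det3 (deriv (hyperbolicHelix a b) v) (deriv (deriv (hyperbolicHelix a b)) v)
      (deriv (deriv (deriv (hyperbolicHelix a b))) v) = a ^ 2 * b := by
  rw [deriv_deriv_deriv_hyperbolicHelix, deriv_deriv_hyperbolicHelix, deriv_hyperbolicHelix]
  simp only [det3, Matrix.cons_val]
  linear_combination a ^ 2 * b * cosh_sq_sub_sinh_sq v

theorem lorentzCurvature_hyperbolicHelix :
    lorentzCurvature (hyperbolicHelix a b) v = |a| / (a ^ 2 + b ^ 2) := by
  have hs : 0 ≤ a ^ 2 + b ^ 2 := by positivity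
  rw [lorentzCurvature, mnorm_of_nonneg (by rw [mdot_lcross_deriv_hyperbolicHelix]; positivity),
    mdot_lcross_deriv_hyperbolicHelix, mdot_deriv_hyperbolicHelix_self, sqrt_mul (sq_nonneg a),
    sqrt_sq_eq_abs, pow_succ √(a ^ 2 + b ^ 2) 2, sq_sqrt hs]
  rcases hs.eq_or_lt with h0 | hpos
  · simp [← h0]
  · field_simp [(sqrt_pos.2 hpos).ne']

theorem lorentzTorsion_hyperbolicHelix {a : ℝ} (ha : a ≠ 0) (b v : ℝ) :
    lorentzTorsion (hyperbolicHelix a b) v = b / (a ^ 2 + b ^ 2) := by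
  rw [lorentzTorsion, mnorm_of_nonneg (by rw [mdot_lcross_deriv_hyperbolicHelix]; positivity),
    sq_sqrt (by rw [mdot_lcross_deriv_hyperbolicHelix]; positivity),
    mdot_lcross_deriv_hyperbolicHelix, det3_derivs_hyperbolicHelix]
  field_simp

end HyperbolicHelix

/-- Example: f(v) = (cosh v, 0, sinh v) is a unit speed timelike curve on S²₁ with
f ×ₗ f' = (0,−1,0) and κ_g ≡ 0; the associated spacelike Bertrand curve
γ(v) = (√2/2)·e·(cos1·sinh v, −sin1·v, cos1·(cosh v − 1)) is spacelike with
⟪γ',γ'⟫ = e²/2 > 0 and is a helix: its curvature and torsion are nonzero constants. -/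
theorem stmt_19 (f γ : ℝ → Fin 3 → ℝ)
    (hfdef : f = fun v => ![Real.cosh v, 0, Real.sinh v])
    (hγdef : γ = fun v => (Real.sqrt 2 / 2 * Real.exp 1) •
      ![Real.cos 1 * Real.sinh v, -(Real.sin 1) * v, Real.cos 1 * (Real.cosh v - 1)])
    (kg : ℝ → ℝ)
    (hkg : kg = fun w => det3 (f w) (deriv f w) (deriv (deriv f) w))
    (K T : ℝ → ℝ)
    (hK : K = fun v => mnorm (lcross (deriv γ v) (deriv (deriv γ) v))
        / Real.sqrt (mdot (deriv γ v) (deriv γ v)) ^ 3)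
    (hT : T = fun v => det3 (deriv γ v) (deriv (deriv γ) v) (deriv (deriv (deriv γ)) v)
        / mnorm (lcross (deriv γ v) (deriv (deriv γ) v)) ^ 2) :
    (∀ v : ℝ, mdot (f v) (f v) = 1) ∧
    (∀ v : ℝ, mdot (deriv f v) (deriv f v) = -1) ∧
    (∀ v : ℝ, lcross (f v) (deriv f v) = ![0, -1, 0]) ∧
    (∀ v : ℝ, kg v = 0) ∧
    (∀ v : ℝ, mdot (deriv γ v) (deriv γ v) = Real.exp 1 ^ 2 / 2) ∧
    (0 < Real.exp 1 ^ 2 / 2) ∧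
    (∃ c₁ : ℝ, c₁ ≠ 0 ∧ ∀ v : ℝ, K v = c₁) ∧
    (∃ c₂ : ℝ, c₂ ≠ 0 ∧ ∀ v : ℝ, T v = c₂) := by
  obtain rfl : f = unitHyperbola := hfdef
  set r := √2 / 2 * exp 1
  have hr : 0 < r := by positivity
  have hγ : γ = hyperbolicHelix (r * cos 1) (-(r * sin 1)) := by
    rw [hγdef]
    funext v i
    fin_cases i <;> simp [hyperbolicHelix] <;> ring
  have hspeed : (r * cos 1) ^ 2 + (-(r * sin 1)) ^ 2 = exp 1 ^ 2 / 2 := by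
    linear_combination (exp 1 ^ 2 / 4) * sq_sqrt (zero_le_two : (0 : ℝ) ≤ 2)
      + r ^ 2 * sin_sq_add_cos_sq 1
  have ha : r * cos 1 ≠ 0 := (mul_pos hr cos_one_pos).ne'
  have hb : -(r * sin 1) ≠ 0 :=
    neg_ne_zero.2 (mul_pos hr (sin_pos_of_pos_of_le_one one_pos le_rfl)).ne'
  have hpos : 0 < exp 1 ^ 2 / 2 := by positivity
  subst hγ hkg hK hT
  refine ⟨mdot_unitHyperbola_self, mdot_deriv_unitHyperbola_self, lcross_unitHyperbola_deriv,
    fun v => ?_, fun v => hspeed ▸ mdot_deriv_hyperbolicHelix_self _ _ v, hpos,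
    ⟨_, div_ne_zero (abs_ne_zero.2 ha) (hspeed ▸ hpos.ne'),
      lorentzCurvature_hyperbolicHelix _ _⟩,
    ⟨_, div_ne_zero hb (hspeed ▸ hpos.ne'), lorentzTorsion_hyperbolicHelix ha _⟩⟩
  change det3 _ _ (deriv (deriv unitHyperbola) v) = 0
  rw [deriv_deriv_unitHyperbola]
  exact det3_self_left _ _
end
end
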